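/- arXiv:2009.13397 — 3 statements merged into one kernel-verified Lean document; each statement's English description precedes it below -/
import Mathlib

section
/- Under the assumptions μ_e, μ_micro, μ_macro, L_c > 0 and the Poincaré–Friedrichs inequality ‖v‖_{L²} ≤ c_F ‖∇v‖_{L²} for all v ∈ H¹₀(Ω), the bilinear form a({u,ζ},{u,ζ}) = ∫_Ω 2μ_e‖∇u−ζ‖² + 2μ_micro‖ζ‖² + μ_macro L_c²|curl ζ|² dX satisfies a({u,ζ},{u,ζ}) ≥ β ‖{u,ζ}‖²_X for all {u,ζ} ∈ X = H¹₀(Ω) × H₀(curl,Ω), where β = (c₃/2)·min{1, 1/(1+c_F²)} with c₃ = min{2μ_e(1−ε), 2μ_e(1−1/ε)+2μ_micro, μ_macro L_c²} for any ε with μ_e/(μ_e+μ_micro) < ε < 1. -/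
/-!
Young's inequality `2ab ≤ εa² + b²/ε` turns the coupling term into the lower bound
`‖∇u - ζ‖² ≥ (1 - ε)‖∇u‖² + (1 - 1/ε)‖ζ‖²`, so the energy dominates
`c₃ (‖∇u‖² + ‖ζ‖² + ‖curl ζ‖²)`; the window for `ε` is exactly what makes `c₃ ≥ 0`.
By Poincaré–Friedrichs `‖u‖² + ‖∇u‖² ≤ (1 + c_F²)‖∇u‖²`, and `(s + t)² ≤ 2(s² + t²)` compares
the sum of the two graph norms with the sum of their squares.
-/

lemma one_sub_mul_norm_sq_add_le_norm_sub_sq {E : Type*} [SeminormedAddCommGroup E]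
    (x y : E) {ε : ℝ} (hε : 0 < ε) :
    (1 - ε) * ‖x‖ ^ 2 + (1 - 1 / ε) * ‖y‖ ^ 2 ≤ ‖x - y‖ ^ 2 := by
  have hyoung := two_mul_le_add_mul_sq (a := ‖x‖) (b := ‖y‖) hε
  have hrev : (‖x‖ - ‖y‖) ^ 2 ≤ ‖x - y‖ ^ 2 := by
    simpa only [sq_abs] using pow_le_pow_left₀ (abs_nonneg _) (abs_norm_sub_norm_le x y) 2
  rw [one_div]
  nlinarith

/-- The constant `c₃` of the coercivity estimate. -/
noncomputable def coercivityConst (μe μmicro μmacro Lc ε : ℝ) : ℝ :=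
  min (2 * μe * (1 - ε)) (min (2 * μe * (1 - 1 / ε) + 2 * μmicro) (μmacro * Lc ^ 2))

section coercivityConst

variable {μe μmicro μmacro Lc ε : ℝ}

lemma coercivityConst_nonneg (hμe : 0 ≤ μe) (hμmacro : 0 ≤ μmacro) (hε : 0 < ε)
    (hε1 : ε ≤ 1) (hεμ : μe ≤ ε * (μe + μmicro)) :
    0 ≤ coercivityConst μe μmicro μmacro Lc ε := by
  have hmicro : 2 * μe * (1 - 1 / ε) + 2 * μmicro = 2 / ε * (ε * (μe + μmicro) - μe) := by
    field_simp
    ring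
  refine le_min (by nlinarith) (le_min ?_ (by positivity))
  rw [hmicro]
  exact mul_nonneg (by positivity) (sub_nonneg.mpr hεμ)

lemma coercivityConst_mul_le {E : Type*} [SeminormedAddCommGroup E] (x y : E) (k : ℝ)
    (hμe : 0 ≤ μe) (hε : 0 < ε) :
    coercivityConst μe μmicro μmacro Lc ε * (‖x‖ ^ 2 + ‖y‖ ^ 2 + k ^ 2) ≤
      2 * μe * ‖x - y‖ ^ 2 + 2 * μmicro * ‖y‖ ^ 2 + μmacro * Lc ^ 2 * k ^ 2 := by
  have hyoung := mul_le_mul_of_nonneg_left (one_sub_mul_norm_sq_add_le_norm_sub_sq x y hε)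
    (by positivity : 0 ≤ 2 * μe)
  have h₁ : coercivityConst μe μmicro μmacro Lc ε ≤ 2 * μe * (1 - ε) := min_le_left _ _
  have h₂ : coercivityConst μe μmicro μmacro Lc ε ≤ 2 * μe * (1 - 1 / ε) + 2 * μmicro :=
    (min_le_right _ _).trans (min_le_left _ _)
  have h₃ : coercivityConst μe μmicro μmacro Lc ε ≤ μmacro * Lc ^ 2 :=
    (min_le_right _ _).trans (min_le_right _ _)
  nlinarith [mul_le_mul_of_nonneg_right h₁ (sq_nonneg ‖x‖),
    mul_le_mul_of_nonneg_right h₂ (sq_nonneg ‖y‖), mul_le_mul_of_nonneg_right h₃ (sq_nonneg k)]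

end coercivityConst

lemma sq_add_sq_le_of_le_mul {p g C : ℝ} (hp : 0 ≤ p) (hpg : p ≤ C * g) :
    p ^ 2 + g ^ 2 ≤ (1 + C ^ 2) * g ^ 2 := by
  have := pow_le_pow_left₀ hp hpg 2
  rw [mul_pow] at this
  linarith

lemma min_one_inv_mul_sqrt_add_sqrt_sq_le {p g C : ℝ} (hp : 0 ≤ p) (hpg : p ≤ C * g)
    (z c : ℝ) :
    min 1 (1 / (1 + C ^ 2)) * (√(p ^ 2 + g ^ 2) + √(z ^ 2 + c ^ 2)) ^ 2 ≤
      2 * (g ^ 2 + z ^ 2 + c ^ 2) := by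
  set m := min 1 (1 / (1 + C ^ 2))
  have hm : 0 ≤ m := le_min zero_le_one (by positivity)
  have hsum : (√(p ^ 2 + g ^ 2) + √(z ^ 2 + c ^ 2)) ^ 2 ≤
      2 * (p ^ 2 + g ^ 2 + (z ^ 2 + c ^ 2)) := by
    have := add_sq_le (a := √(p ^ 2 + g ^ 2)) (b := √(z ^ 2 + c ^ 2))
    rwa [Real.sq_sqrt (by positivity), Real.sq_sqrt (by positivity)] at this
  have hH1 : m * (p ^ 2 + g ^ 2) ≤ g ^ 2 :=
    calc m * (p ^ 2 + g ^ 2) ≤ 1 / (1 + C ^ 2) * ((1 + C ^ 2) * g ^ 2) :=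
          mul_le_mul (min_le_right _ _) (sq_add_sq_le_of_le_mul hp hpg) (by positivity)
            (by positivity)
      _ = g ^ 2 := by field_simp
  have hHcurl : m * (z ^ 2 + c ^ 2) ≤ z ^ 2 + c ^ 2 :=
    mul_le_of_le_one_left (by positivity) (min_le_left _ _)
  calc m * (√(p ^ 2 + g ^ 2) + √(z ^ 2 + c ^ 2)) ^ 2
      ≤ m * (2 * (p ^ 2 + g ^ 2 + (z ^ 2 + c ^ 2))) := by gcongr
    _ = 2 * (m * (p ^ 2 + g ^ 2) + m * (z ^ 2 + c ^ 2)) := by ring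
    _ ≤ 2 * (g ^ 2 + z ^ 2 + c ^ 2) := by linarith

theorem coercivity_bilinear_form_general
    {V W L2s L2v : Type*}
    [NormedAddCommGroup V] [InnerProductSpace ℝ V]
    [NormedAddCommGroup W] [InnerProductSpace ℝ W]
    [NormedAddCommGroup L2s] [InnerProductSpace ℝ L2s]
    [NormedAddCommGroup L2v] [InnerProductSpace ℝ L2v]
    (ιV : V →L[ℝ] L2s) (grad : V →L[ℝ] L2v)
    (ιW : W →L[ℝ] L2v) (curl : W →L[ℝ] L2s)
    (μe μmicro μmacro Lc cF : ℝ)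
    (hμe : 0 < μe) (hμmicro : 0 < μmicro) (hμmacro : 0 < μmacro)
    (hPF : ∀ v : V, ‖ιV v‖ ≤ cF * ‖grad v‖) :
    ∀ ε : ℝ, μe / (μe + μmicro) < ε → ε < 1 →
      ∀ (u : V) (ζ : W),
        (min (2 * μe * (1 - ε)) (min (2 * μe * (1 - 1 / ε) + 2 * μmicro) (μmacro * Lc ^ 2)) / 2
            * min 1 (1 / (1 + cF ^ 2))) *
          (Real.sqrt (‖ιV u‖ ^ 2 + ‖grad u‖ ^ 2) + Real.sqrt (‖ιW ζ‖ ^ 2 + ‖curl ζ‖ ^ 2)) ^ 2 ≤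
        2 * μe * ‖grad u - ιW ζ‖ ^ 2 + 2 * μmicro * ‖ιW ζ‖ ^ 2
          + μmacro * Lc ^ 2 * ‖curl ζ‖ ^ 2 := by
  intro ε hε hε1 u ζ
  have hsum : 0 < μe + μmicro := add_pos hμe hμmicro
  have hε0 : 0 < ε := (div_nonneg hμe.le hsum.le).trans_lt hε
  have hεμ : μe ≤ ε * (μe + μmicro) := ((div_lt_iff₀ hsum).mp hε).le
  have hc₃ : 0 ≤ coercivityConst μe μmicro μmacro Lc ε :=
    coercivityConst_nonneg hμe.le hμmacro.le hε0 hε1.le hεμ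
  have hnorms := min_one_inv_mul_sqrt_add_sqrt_sq_le (norm_nonneg _) (hPF u) ‖ιW ζ‖ ‖curl ζ‖
  change coercivityConst μe μmicro μmacro Lc ε / 2 * _ * _ ≤ _
  calc _ = coercivityConst μe μmicro μmacro Lc ε / 2 * (min 1 (1 / (1 + cF ^ 2)) *
        (√(‖ιV u‖ ^ 2 + ‖grad u‖ ^ 2) + √(‖ιW ζ‖ ^ 2 + ‖curl ζ‖ ^ 2)) ^ 2) := by ring
    _ ≤ coercivityConst μe μmicro μmacro Lc ε / 2 *
        (2 * (‖grad u‖ ^ 2 + ‖ιW ζ‖ ^ 2 + ‖curl ζ‖ ^ 2)) := by gcongr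
    _ = coercivityConst μe μmicro μmacro Lc ε * (‖grad u‖ ^ 2 + ‖ιW ζ‖ ^ 2 + ‖curl ζ‖ ^ 2) := by
        ring
    _ ≤ _ := coercivityConst_mul_le _ _ _ hμe.le hε0

/-- Coercivity of the relaxed micromorphic bilinear form under the Poincaré–Friedrichs
inequality `‖v‖_{L²} ≤ c_F ‖∇v‖_{L²}` on `H¹₀(Ω)`.
`V` models `H¹₀(Ω)`, `W` models `H₀(curl,Ω)`; with
`c₃ = min{2μe(1-ε), 2μe(1-1/ε)+2μmicro, μmacro Lc²}` for any `ε` with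
`μe/(μe+μmicro) < ε < 1`, and `β = (c₃/2)·min{1, 1/(1+c_F²)}`, the quadratic form
`a({u,ζ},{u,ζ}) = 2μe‖∇u-ζ‖² + 2μmicro‖ζ‖² + μmacro Lc² ‖curl ζ‖²` dominates
`β ‖{u,ζ}‖²_X`. -/
theorem coercivity_bilinear_form
    {V W L2s L2v : Type*}
    [NormedAddCommGroup V] [InnerProductSpace ℝ V]
    [NormedAddCommGroup W] [InnerProductSpace ℝ W]
    [NormedAddCommGroup L2s] [InnerProductSpace ℝ L2s]
    [NormedAddCommGroup L2v] [InnerProductSpace ℝ L2v]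
    (ιV : V →L[ℝ] L2s) (grad : V →L[ℝ] L2v)
    (ιW : W →L[ℝ] L2v) (curl : W →L[ℝ] L2s)
    (μe μmicro μmacro Lc cF : ℝ)
    (hμe : 0 < μe) (hμmicro : 0 < μmicro) (hμmacro : 0 < μmacro) (hLc : 0 < Lc)
    (hcF : 0 < cF)
    (hPF : ∀ v : V, ‖ιV v‖ ≤ cF * ‖grad v‖) :
    ∀ ε : ℝ, μe / (μe + μmicro) < ε → ε < 1 →
      ∀ (u : V) (ζ : W),
        (min (2 * μe * (1 - ε)) (min (2 * μe * (1 - 1 / ε) + 2 * μmicro) (μmacro * Lc ^ 2)) / 2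
            * min 1 (1 / (1 + cF ^ 2))) *
          (Real.sqrt (‖ιV u‖ ^ 2 + ‖grad u‖ ^ 2) + Real.sqrt (‖ιW ζ‖ ^ 2 + ‖curl ζ‖ ^ 2)) ^ 2 ≤
        2 * μe * ‖grad u - ιW ζ‖ ^ 2 + 2 * μmicro * ‖ιW ζ‖ ^ 2
          + μmacro * Lc ^ 2 * ‖curl ζ‖ ^ 2 :=
  coercivity_bilinear_form_general ιV grad ιW curl μe μmicro μmacro Lc cF hμe hμmicro hμmacro hPF
end

section
/- If ω = ∇r with r ∈ H¹(Ω) and ζ = ∇χ satisfies 2(μ_e+μ_micro)∇χ = ∇r + 2μ_e∇u, then substituting into the weak equation for u yields the Laplace-type problem ∫_Ω (2μ_e μ_micro/(μ_e+μ_micro))⟨∇u,∇δu⟩ dX = ∫_Ω f δu + (μ_e/(μ_e+μ_micro))⟨∇r,∇δu⟩ dX for all δu ∈ H¹₀(Ω), i.e., the effective macroscopic shear modulus is the harmonic-type mean μ_macro = μ_e μ_micro/(μ_e+μ_micro). -/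
open scoped RealInnerProductSpace

/-! Solving the condensation relation for `∇χ` expresses `2μe(∇u - ∇χ)` as
`2 μe μmicro/(μe+μmicro) ∇u - μe/(μe+μmicro) ∇r`; pairing this with `∇δu` turns the weak
equation for `u` into the Laplace-type problem. -/

theorem smul_sub_eq_of_condensation {E : Type*} [AddCommGroup E] [Module ℝ E]
    {μe μmicro : ℝ} (hs : μe + μmicro ≠ 0) {gu gχ gr : E}
    (hχ : (2 * (μe + μmicro)) • gχ = gr + (2 * μe) • gu) :
    (2 * μe) • (gu - gχ) =
      (2 * μe * μmicro / (μe + μmicro)) • gu - (μe / (μe + μmicro)) • gr := by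
  apply smul_right_injective E hs
  have hmacro : (μe + μmicro) * (2 * μe * μmicro / (μe + μmicro)) = 2 * μe * μmicro := by
    field_simp
  have hratio : (μe + μmicro) * (μe / (μe + μmicro)) = μe := by field_simp
  simp only [smul_sub, smul_smul, hmacro, hratio]
  linear_combination (norm := module) (-μe) • hχ

/-- Static condensation of the microdistortion for a gradient right-hand side:
if `2(μe+μmicro)∇χ = ∇r + 2μe∇u` and `ζ = ∇χ` satisfies the weak equation
`∫ 2μe⟨∇u-ζ,∇δu⟩ = ∫ f δu` for all `δu ∈ H¹₀(Ω)`, then the Laplace-type problem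
`∫ (2μeμmicro/(μe+μmicro))⟨∇u,∇δu⟩ = ∫ f δu + (μe/(μe+μmicro))⟨∇r,∇δu⟩` holds,
i.e. the effective macroscopic modulus is `μe μmicro/(μe+μmicro)`.
Here `gu, gχ, gr ∈ L²(Ω)²` denote `∇u, ∇χ, ∇r`, `grad` is the gradient on `H¹₀(Ω)`
and `F δu = ∫ f δu`. -/
theorem condensed_laplace_problem
    {V L2v : Type*}
    [NormedAddCommGroup V] [InnerProductSpace ℝ V]
    [NormedAddCommGroup L2v] [InnerProductSpace ℝ L2v]
    (grad : V →L[ℝ] L2v)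
    (μe μmicro : ℝ) (hμe : 0 < μe) (hμmicro : 0 < μmicro)
    (gu gχ gr : L2v) (F : V → ℝ)
    (hχ : (2 * (μe + μmicro)) • gχ = gr + (2 * μe) • gu)
    (hweak : ∀ δu : V, 2 * μe * ⟪gu - gχ, grad δu⟫ = F δu) :
    ∀ δu : V,
      (2 * μe * μmicro / (μe + μmicro)) * ⟪gu, grad δu⟫ =
        F δu + (μe / (μe + μmicro)) * ⟪gr, grad δu⟫ := by
  intro δu
  have hstress := congrArg (⟪·, grad δu⟫) (smul_sub_eq_of_condensation (by positivity) hχ)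
  rw [real_inner_smul_left, hweak, inner_sub_left, real_inner_smul_left,
    real_inner_smul_left] at hstress
  linarith
end

section
/- Combining the L_c-robust stability of the mixed problem with continuous dependence on the penalty parameter: if ({u,ζ},m) solves the mixed problem with parameter t = 1/(μ_macro L_c²) ≤ 1 and ({u_∞,ζ_∞},m_∞) solves the limit problem (t = 0), then ‖{u_∞−u, ζ_∞−ζ}‖_X + ‖m_∞ − m‖_{L²} ≤ (c₂/L_c²)(‖f‖_{L²} + ‖ω‖_{L²}) with c₂ independent of L_c. -/
open scoped RealInnerProductSpace

/-!
The constraint equation forces `b p = t m` exactly: `b p - t m` has zero mean and is orthogonal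
to every zero-mean function. Subtracting the two problems, the error `(e, m∞ - m)`, `e = p∞ - p`,
solves the homogeneous saddle point problem with `b e = -t m`. The inf–sup lift bounds the
multiplier error by the energy of `e`, testing with `e` bounds that energy by
`t ‖m‖ ‖m∞ - m‖`, and coercivity on `ker b`, applied to `e` minus a lift of `b e`, controls the
full `X`-norm of `e`; everything is `O(t ‖m‖)`. The same three tools bound `‖m‖` by the data
uniformly in `t ≤ 1`, and `t = 1/(μmacro Lc²)` gives the factor `1/Lc²`.
-/

theorem le_add_sqrt_of_sq_le_mul_add {x a b : ℝ} (ha : 0 ≤ a) (hb : 0 ≤ b)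
    (h : x ^ 2 ≤ a * x + b) : x ≤ a + √b := by
  by_contra! hlt
  have hsq := Real.sq_sqrt hb
  have hs := Real.sqrt_nonneg b
  nlinarith [mul_lt_mul_of_pos_right (show √b < x by linarith) (show 0 < x - a by linarith)]

theorem le_of_sq_le_mul {x a : ℝ} (ha : 0 ≤ a) (h : x ^ 2 ≤ a * x) : x ≤ a := by
  simpa using le_add_sqrt_of_sq_le_mul_add ha le_rfl (by simpa using h)

section MixedProblem

variable {X H M : Type*} [AddCommGroup X] [Module ℝ X]
  [NormedAddCommGroup H] [InnerProductSpace ℝ H] [NormedAddCommGroup M] [InnerProductSpace ℝ M]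

/-- The paper's `a(p, q)` is `⟪T p, T q⟫` and `b(q, m)` is `⟪B q, m⟫`. -/
structure IsMixedSolution (T : X →ₗ[ℝ] H) (B : X →ₗ[ℝ] M) (M₀ : Submodule ℝ M) (d : X → ℝ)
    (t : ℝ) (p : X) (m : M) : Prop where
  mem : m ∈ M₀
  eq_load : ∀ q, ⟪T p, T q⟫ + ⟪B q, m⟫ = d q
  eq_constraint : ∀ δ ∈ M₀, ⟪B p, δ⟫ - t * ⟪m, δ⟫ = 0

variable {T : X →ₗ[ℝ] H} {B : X →ₗ[ℝ] M} {M₀ : Submodule ℝ M} {d : X → ℝ} {t : ℝ} {p : X}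
  {m : M}

namespace IsMixedSolution

theorem apply_eq_smul (hB : ∀ q, B q ∈ M₀) (h : IsMixedSolution T B M₀ d t p m) :
    B p = t • m := by
  have h₀ := h.eq_constraint _ (M₀.sub_mem (hB p) (M₀.smul_mem t h.mem))
  rwa [← sub_eq_zero, ← inner_self_eq_zero (𝕜 := ℝ), inner_sub_left, real_inner_smul_left]

theorem norm_sq_add_mul_norm_sq (hB : ∀ q, B q ∈ M₀) (h : IsMixedSolution T B M₀ d t p m) :
    ‖T p‖ ^ 2 + t * ‖m‖ ^ 2 = d p := by
  have h₀ := h.eq_load p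
  rwa [h.apply_eq_smul hB, real_inner_smul_left, real_inner_self_eq_norm_sq,
    real_inner_self_eq_norm_sq] at h₀

theorem inner_sub_add_inner_sub {t' : ℝ} {p' : X} {m' : M} (h : IsMixedSolution T B M₀ d t p m)
    (h' : IsMixedSolution T B M₀ d t' p' m') (q : X) :
    ⟪T (p' - p), T q⟫ + ⟪B q, m' - m⟫ = 0 := by
  rw [map_sub, inner_sub_left, inner_sub_right]
  linarith [h.eq_load q, h'.eq_load q]

end IsMixedSolution

variable {N : Seminorm ℝ X} {α cT cN : ℝ}

theorem seminorm_le_of_lift (hcoer : ∀ q, B q = 0 → α * N q ^ 2 ≤ ‖T q‖ ^ 2)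
    (hlift : ∀ r ∈ M₀, ∃ z, B z = r ∧ ‖T z‖ ≤ cT * ‖r‖ ∧ N z ≤ cN * ‖r‖) (hα : 0 < α)
    {q : X} (hq : B q ∈ M₀) :
    N q ≤ (‖T q‖ + cT * ‖B q‖) / √α + cN * ‖B q‖ := by
  obtain ⟨z, hBz, hTz, hNz⟩ := hlift _ hq
  have hker : √α * N (q - z) ≤ ‖T q‖ + cT * ‖B q‖ := calc
    √α * N (q - z) ≤ ‖T (q - z)‖ := by
      refine (pow_le_pow_iff_left₀ (by positivity) (norm_nonneg _) two_ne_zero).mp ?_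
      rw [mul_pow, Real.sq_sqrt hα.le]
      exact hcoer _ (by rw [map_sub, hBz, sub_self])
    _ ≤ ‖T q‖ + ‖T z‖ := by rw [map_sub]; exact norm_sub_le _ _
    _ ≤ ‖T q‖ + cT * ‖B q‖ := by gcongr
  calc N q = N (q - z + z) := by rw [sub_add_cancel]
    _ ≤ N (q - z) + N z := map_add_le_add N _ _
    _ ≤ _ := add_le_add ((le_div_iff₀' (by positivity)).mpr hker) hNz

theorem norm_le_of_lift
    (hlift : ∀ r ∈ M₀, ∃ z, B z = r ∧ ‖T z‖ ≤ cT * ‖r‖ ∧ N z ≤ cN * ‖r‖) (hcT : 0 ≤ cT)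
    (hcN : 0 ≤ cN) {F : ℝ} (hF : 0 ≤ F) (hd : ∀ q, d q ≤ F * N q) (hm : m ∈ M₀)
    (h : ∀ q, ⟪T p, T q⟫ + ⟪B q, m⟫ = d q) :
    ‖m‖ ≤ cT * ‖T p‖ + cN * F := by
  obtain ⟨z, hBz, hTz, hNz⟩ := hlift m hm
  refine le_of_sq_le_mul (by positivity) ?_
  calc ‖m‖ ^ 2 = d z - ⟪T p, T z⟫ := by
        have hz := h z
        rw [hBz, real_inner_self_eq_norm_sq] at hz
        linarith
    _ ≤ F * N z + ‖T p‖ * ‖T z‖ := by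
        linarith [hd z, neg_le_of_abs_le (abs_real_inner_le_norm (T p) (T z))]
    _ ≤ F * (cN * ‖m‖) + ‖T p‖ * (cT * ‖m‖) := by gcongr
    _ = (cT * ‖T p‖ + cN * F) * ‖m‖ := by ring

theorem exists_norm_le_of_isMixedSolution (hB : ∀ q, B q ∈ M₀)
    (hcoer : ∀ q, B q = 0 → α * N q ^ 2 ≤ ‖T q‖ ^ 2)
    (hlift : ∀ r ∈ M₀, ∃ z, B z = r ∧ ‖T z‖ ≤ cT * ‖r‖ ∧ N z ≤ cN * ‖r‖) (hα : 0 < α)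
    (hcT : 0 ≤ cT) (hcN : 0 < cN) :
    ∃ C, 0 < C ∧ ∀ {d : X → ℝ} {F t : ℝ} {p : X} {m : M}, 0 ≤ F → (∀ q, d q ≤ F * N q) →
      0 ≤ t → t ≤ 1 → IsMixedSolution T B M₀ d t p m → ‖m‖ ≤ C * F := by
  set l := cT / √α + cN
  set k₁ := 1 / √α + l * cT
  set k₂ := l * cN
  refine ⟨cT * (k₁ + √k₂) + cN, by positivity, fun {d F t p m} hF hd ht₀ ht₁ h => ?_⟩
  have hm := norm_le_of_lift hlift hcT hcN.le hF hd h.mem h.eq_load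
  have hBp : ‖B p‖ ≤ ‖m‖ := by
    rw [h.apply_eq_smul hB, norm_smul, Real.norm_of_nonneg ht₀]
    exact mul_le_of_le_one_left (norm_nonneg _) ht₁
  have hN : N p ≤ k₁ * ‖T p‖ + k₂ * F := calc
    N p ≤ (‖T p‖ + cT * ‖B p‖) / √α + cN * ‖B p‖ := seminorm_le_of_lift hcoer hlift hα (hB p)
    _ ≤ (‖T p‖ + cT * ‖m‖) / √α + cN * ‖m‖ := by gcongr
    _ = ‖T p‖ / √α + l * ‖m‖ := by ring
    _ ≤ ‖T p‖ / √α + l * (cT * ‖T p‖ + cN * F) := by gcongr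
    _ = k₁ * ‖T p‖ + k₂ * F := by ring
  have henergy : ‖T p‖ ^ 2 ≤ (k₁ * F) * ‖T p‖ + k₂ * F ^ 2 := by
    nlinarith [h.norm_sq_add_mul_norm_sq hB, hd p, mul_le_mul_of_nonneg_left hN hF,
      mul_nonneg ht₀ (sq_nonneg ‖m‖)]
  have hTp : ‖T p‖ ≤ (k₁ + √k₂) * F := by
    have := le_add_sqrt_of_sq_le_mul_add (by positivity) (by positivity) henergy
    rwa [Real.sqrt_mul (by positivity), Real.sqrt_sq hF, ← add_mul] at this
  calc ‖m‖ ≤ cT * ‖T p‖ + cN * F := hm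
    _ ≤ cT * ((k₁ + √k₂) * F) + cN * F := by gcongr
    _ = (cT * (k₁ + √k₂) + cN) * F := by ring

theorem IsMixedSolution.seminorm_sub_add_norm_sub_le (hB : ∀ q, B q ∈ M₀)
    (hcoer : ∀ q, B q = 0 → α * N q ^ 2 ≤ ‖T q‖ ^ 2)
    (hlift : ∀ r ∈ M₀, ∃ z, B z = r ∧ ‖T z‖ ≤ cT * ‖r‖ ∧ N z ≤ cN * ‖r‖) (hα : 0 < α)
    (hcT : 0 ≤ cT) (hcN : 0 ≤ cN) (ht : 0 ≤ t) (h : IsMixedSolution T B M₀ d t p m)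
    {p₀ : X} {m₀ : M} (h₀ : IsMixedSolution T B M₀ d 0 p₀ m₀) :
    N (p₀ - p) + ‖m₀ - m‖ ≤ (2 * cT / √α + cN + cT ^ 2) * (t * ‖m‖) := by
  have hBe : B (p₀ - p) = -(t • m) := by
    rw [map_sub, h₀.apply_eq_smul hB, h.apply_eq_smul hB, zero_smul, zero_sub]
  have hnBe : ‖B (p₀ - p)‖ = t * ‖m‖ := by
    rw [hBe, norm_neg, norm_smul, Real.norm_of_nonneg ht]
  have herr := h.inner_sub_add_inner_sub h₀
  have hmult : ‖m₀ - m‖ ≤ cT * ‖T (p₀ - p)‖ := by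
    simpa using norm_le_of_lift (d := 0) hlift hcT hcN le_rfl (fun _ => by simp)
      (M₀.sub_mem h₀.mem h.mem) herr
  have hTe : ‖T (p₀ - p)‖ ≤ cT * (t * ‖m‖) := by
    refine le_of_sq_le_mul (by positivity) ?_
    calc ‖T (p₀ - p)‖ ^ 2 = t * ⟪m, m₀ - m⟫ := by
          have he := herr (p₀ - p)
          rw [hBe, inner_neg_left, real_inner_smul_left, real_inner_self_eq_norm_sq] at he
          linarith
      _ ≤ t * (‖m‖ * ‖m₀ - m‖) := by gcongr; exact real_inner_le_norm _ _
      _ ≤ t * (‖m‖ * (cT * ‖T (p₀ - p)‖)) := by gcongr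
      _ = cT * (t * ‖m‖) * ‖T (p₀ - p)‖ := by ring
  have hNe := seminorm_le_of_lift hcoer hlift hα (hB (p₀ - p))
  rw [hnBe] at hNe
  calc N (p₀ - p) + ‖m₀ - m‖
      ≤ (cT * (t * ‖m‖) + cT * (t * ‖m‖)) / √α + cN * (t * ‖m‖) + cT * (cT * (t * ‖m‖)) := by
        gcongr
        · exact hNe.trans (by gcongr)
        · exact hmult.trans (by gcongr)
    _ = (2 * cT / √α + cN + cT ^ 2) * (t * ‖m‖) := by ring

end MixedProblem

section GraphSeminorm

variable {V E F : Type*} [AddCommGroup V] [Module ℝ V] [NormedAddCommGroup E] [NormedSpace ℝ E]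
  [NormedAddCommGroup F] [NormedSpace ℝ F]

noncomputable def graphSeminorm (A : V →ₗ[ℝ] E) (D : V →ₗ[ℝ] F) : Seminorm ℝ V :=
  (normSeminorm ℝ (WithLp 2 (E × F))).comp
    ((WithLp.linearEquiv 2 ℝ (E × F)).symm.toLinearMap ∘ₗ A.prod D)

theorem graphSeminorm_apply (A : V →ₗ[ℝ] E) (D : V →ₗ[ℝ] F) (x : V) :
    graphSeminorm A D x = √(‖A x‖ ^ 2 + ‖D x‖ ^ 2) := by
  simp [graphSeminorm, WithLp.prod_norm_eq_of_L2]

theorem norm_le_graphSeminorm (A : V →ₗ[ℝ] E) (D : V →ₗ[ℝ] F) (x : V) :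
    ‖A x‖ ≤ graphSeminorm A D x := by
  rw [graphSeminorm_apply]
  exact Real.le_sqrt_of_sq_le (le_add_of_nonneg_right (sq_nonneg _))

theorem graphSeminorm_le_norm_add_norm (A : V →ₗ[ℝ] E) (D : V →ₗ[ℝ] F) (x : V) :
    graphSeminorm A D x ≤ ‖A x‖ + ‖D x‖ := by
  rw [graphSeminorm_apply, Real.sqrt_le_left (by positivity)]
  nlinarith [norm_nonneg (A x), norm_nonneg (D x)]

end GraphSeminorm

section EnergyMap

variable {V W Ls Lv : Type*} [AddCommGroup V] [Module ℝ V] [AddCommGroup W] [Module ℝ W]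
  [NormedAddCommGroup Ls] [InnerProductSpace ℝ Ls] [NormedAddCommGroup Lv] [InnerProductSpace ℝ Lv]
  (ιV : V →ₗ[ℝ] Ls) (grad : V →ₗ[ℝ] Lv) (ιW : W →ₗ[ℝ] Lv) (curl : W →ₗ[ℝ] Ls)

/-- `q ↦ (√a (grad q.1 - ιW q.2), √b ιW q.2)`, whose Gram form is the energy form. -/
noncomputable def energyMap (a b : ℝ) : V × W →ₗ[ℝ] WithLp 2 (Lv × Lv) :=
  (WithLp.linearEquiv 2 ℝ (Lv × Lv)).symm.toLinearMap ∘ₗ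
    (√a • (grad ∘ₗ LinearMap.fst ℝ V W - ιW ∘ₗ LinearMap.snd ℝ V W)).prod
      (√b • (ιW ∘ₗ LinearMap.snd ℝ V W))

noncomputable def prodGraphSeminorm : Seminorm ℝ (V × W) :=
  (graphSeminorm ιV grad).comp (LinearMap.fst ℝ V W) +
    (graphSeminorm ιW curl).comp (LinearMap.snd ℝ V W)

theorem prodGraphSeminorm_apply (q : V × W) :
    prodGraphSeminorm ιV grad ιW curl q =
      √(‖ιV q.1‖ ^ 2 + ‖grad q.1‖ ^ 2) + √(‖ιW q.2‖ ^ 2 + ‖curl q.2‖ ^ 2) := by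
  simp [prodGraphSeminorm, graphSeminorm_apply]

variable {a b : ℝ}

theorem inner_energyMap (ha : 0 ≤ a) (hb : 0 ≤ b) (p q : V × W) :
    ⟪energyMap grad ιW a b p, energyMap grad ιW a b q⟫ =
      a * ⟪grad p.1 - ιW p.2, grad q.1 - ιW q.2⟫ + b * ⟪ιW p.2, ιW q.2⟫ := by
  simp only [energyMap, LinearMap.coe_comp, LinearEquiv.coe_coe, Function.comp_apply,
    LinearMap.prod_apply, LinearMap.coe_smul, LinearMap.coe_snd, Function.prod_apply, Pi.smul_apply,
    LinearMap.sub_apply, LinearMap.coe_fst, WithLp.linearEquiv_symm_apply, AddEquiv.toEquiv_eq_coe,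
    Equiv.invFun_as_coe, AddEquiv.coe_toEquiv_symm, WithLp.addEquiv_symm_apply,
    WithLp.prod_inner_apply, real_inner_smul_right, real_inner_smul_left]
  rw [← mul_assoc, ← mul_assoc, Real.mul_self_sqrt ha, Real.mul_self_sqrt hb]

theorem norm_energyMap_sq (ha : 0 ≤ a) (hb : 0 ≤ b) (q : V × W) :
    ‖energyMap grad ιW a b q‖ ^ 2 = a * ‖grad q.1 - ιW q.2‖ ^ 2 + b * ‖ιW q.2‖ ^ 2 := by
  rw [← real_inner_self_eq_norm_sq, inner_energyMap grad ιW ha hb, real_inner_self_eq_norm_sq,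
    real_inner_self_eq_norm_sq]

theorem isMixedSolution_energyMap (mean : Ls →ₗ[ℝ] ℝ) (ha : 0 ≤ a) (hb : 0 ≤ b) {d : V × W → ℝ}
    {t : ℝ} {p : V × W} {m : Ls} (hm : mean m = 0)
    (hload : ∀ q : V × W, a * ⟪grad p.1 - ιW p.2, grad q.1 - ιW q.2⟫ + b * ⟪ιW p.2, ιW q.2⟫
      + ⟪curl q.2, m⟫ = d q)
    (hconstraint : ∀ δ, mean δ = 0 → ⟪curl p.2, δ⟫ - t * ⟪m, δ⟫ = 0) :
    IsMixedSolution (energyMap grad ιW a b) (curl ∘ₗ LinearMap.snd ℝ V W) (LinearMap.ker mean)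
      d t p m where
  mem := hm
  eq_load q := by rw [inner_energyMap grad ιW ha hb]; exact hload q
  eq_constraint := hconstraint

theorem exists_lift_of_infSup (mean : Ls →ₗ[ℝ] ℝ) (ha : 0 ≤ a) (hb : 0 ≤ b) {γ : ℝ}
    (hinfsup : ∀ m, mean m = 0 → ∃ ζ, curl ζ = m ∧ ‖ιW ζ‖ ≤ 1 / γ * ‖m‖) :
    ∀ r ∈ LinearMap.ker mean, ∃ z, (curl ∘ₗ LinearMap.snd ℝ V W) z = r ∧
      ‖energyMap grad ιW a b z‖ ≤ √(a + b) / γ * ‖r‖ ∧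
      prodGraphSeminorm ιV grad ιW curl z ≤ (1 / γ + 1) * ‖r‖ := by
  intro r hr
  obtain ⟨ζ, hcurl, hζ⟩ := hinfsup r hr
  refine ⟨(0, ζ), hcurl, ?_, ?_⟩
  · have hsq : ‖energyMap grad ιW a b (0, ζ)‖ ^ 2 = (√(a + b) * ‖ιW ζ‖) ^ 2 := by
      rw [norm_energyMap_sq grad ιW ha hb, mul_pow, Real.sq_sqrt (add_nonneg ha hb)]
      simp only [map_zero, zero_sub, norm_neg]
      ring
    calc ‖energyMap grad ιW a b (0, ζ)‖ = √(a + b) * ‖ιW ζ‖ :=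
          (pow_left_inj₀ (norm_nonneg _) (by positivity) two_ne_zero).mp hsq
      _ ≤ √(a + b) * (1 / γ * ‖r‖) := by gcongr
      _ = √(a + b) / γ * ‖r‖ := by ring
  · calc prodGraphSeminorm ιV grad ιW curl (0, ζ) = graphSeminorm ιW curl ζ := by
          simp [prodGraphSeminorm]
      _ ≤ ‖ιW ζ‖ + ‖curl ζ‖ := graphSeminorm_le_norm_add_norm ιW curl ζ
      _ ≤ 1 / γ * ‖r‖ + ‖r‖ := by rw [hcurl]; gcongr
      _ = (1 / γ + 1) * ‖r‖ := by ring

theorem load_le_mul_prodGraphSeminorm (f : Ls) (ω : Lv) (q : V × W) :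
    ⟪f, ιV q.1⟫ + ⟪ω, ιW q.2⟫ ≤ (‖f‖ + ‖ω‖) * prodGraphSeminorm ιV grad ιW curl q := by
  have h₁ := (real_inner_le_norm f (ιV q.1)).trans
    (mul_le_mul_of_nonneg_left (norm_le_graphSeminorm ιV grad q.1) (norm_nonneg f))
  have h₂ := (real_inner_le_norm ω (ιW q.2)).trans
    (mul_le_mul_of_nonneg_left (norm_le_graphSeminorm ιW curl q.2) (norm_nonneg ω))
  simp only [prodGraphSeminorm, add_apply, Seminorm.comp_apply, LinearMap.coe_fst,
    LinearMap.coe_snd]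
  nlinarith [apply_nonneg (graphSeminorm ιV grad) q.1, apply_nonneg (graphSeminorm ιW curl) q.2,
    norm_nonneg f, norm_nonneg ω]

end EnergyMap

theorem mixed_problem_Lc_perturbation_general
    {V W L2s L2v : Type*}
    [NormedAddCommGroup V] [InnerProductSpace ℝ V]
    [NormedAddCommGroup W] [InnerProductSpace ℝ W]
    [NormedAddCommGroup L2s] [InnerProductSpace ℝ L2s]
    [NormedAddCommGroup L2v] [InnerProductSpace ℝ L2v]
    (ιV : V →L[ℝ] L2s) (grad : V →L[ℝ] L2v)
    (ιW : W →L[ℝ] L2v) (curl : W →L[ℝ] L2s)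
    (mean : L2s →L[ℝ] ℝ) (hStokes : ∀ ζ : W, mean (curl ζ) = 0)
    (μe μmicro μmacro : ℝ) (hμe : 0 < μe) (hμmicro : 0 < μmicro) (hμmacro : 0 < μmacro)
    (α : ℝ) (hα : 0 < α)
    (hker : ∀ p : V × W, curl p.2 = 0 →
      α * (Real.sqrt (‖ιV p.1‖ ^ 2 + ‖grad p.1‖ ^ 2)
            + Real.sqrt (‖ιW p.2‖ ^ 2 + ‖curl p.2‖ ^ 2)) ^ 2 ≤
        2 * μe * ‖grad p.1 - ιW p.2‖ ^ 2 + 2 * μmicro * ‖ιW p.2‖ ^ 2)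
    (γ : ℝ) (hγ : 0 < γ)
    (hinfsup : ∀ m : L2s, mean m = 0 →
      ∃ ζ : W, curl ζ = m ∧ ‖ιW ζ‖ ≤ (1 / γ) * ‖m‖)
    (f : L2s) (ω : L2v) :
    ∃ c₂ : ℝ, 0 < c₂ ∧
      ∀ Lc : ℝ, 0 < Lc → 1 / (μmacro * Lc ^ 2) ≤ 1 →
        ∀ (p : V × W) (m : L2s) (pInf : V × W) (mInf : L2s),
          mean m = 0 → mean mInf = 0 →
          (∀ q : V × W,
            2 * μe * ⟪grad p.1 - ιW p.2, grad q.1 - ιW q.2⟫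
              + 2 * μmicro * ⟪ιW p.2, ιW q.2⟫ + ⟪curl q.2, m⟫
            = ⟪f, ιV q.1⟫ + ⟪ω, ιW q.2⟫) →
          (∀ δm : L2s, mean δm = 0 →
            ⟪curl p.2, δm⟫ - (1 / (μmacro * Lc ^ 2)) * ⟪m, δm⟫ = 0) →
          (∀ q : V × W,
            2 * μe * ⟪grad pInf.1 - ιW pInf.2, grad q.1 - ιW q.2⟫
              + 2 * μmicro * ⟪ιW pInf.2, ιW q.2⟫ + ⟪curl q.2, mInf⟫
            = ⟪f, ιV q.1⟫ + ⟪ω, ιW q.2⟫) →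
          (∀ δm : L2s, mean δm = 0 → ⟪curl pInf.2, δm⟫ = 0) →
          Real.sqrt (‖ιV (pInf.1 - p.1)‖ ^ 2 + ‖grad (pInf.1 - p.1)‖ ^ 2)
              + Real.sqrt (‖ιW (pInf.2 - p.2)‖ ^ 2 + ‖curl (pInf.2 - p.2)‖ ^ 2)
              + ‖mInf - m‖ ≤
            c₂ / Lc ^ 2 * (‖f‖ + ‖ω‖) := by
  have ha : 0 ≤ 2 * μe := by positivity
  have hb : 0 ≤ 2 * μmicro := by positivity
  set T := energyMap (V := V) (W := W) (Lv := L2v) grad ιW (2 * μe) (2 * μmicro)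
  set N := prodGraphSeminorm (V := V) (W := W) (Ls := L2s) (Lv := L2v) ιV grad ιW curl
  have hB : ∀ q : V × W, curl q.2 ∈ LinearMap.ker (mean : L2s →ₗ[ℝ] ℝ) := fun q => hStokes q.2
  have hcoer : ∀ q : V × W, curl q.2 = 0 → α * N q ^ 2 ≤ ‖T q‖ ^ 2 := fun q hq => by
    rw [prodGraphSeminorm_apply, norm_energyMap_sq _ _ ha hb]
    exact hker q hq
  have hlift := exists_lift_of_infSup (V := V) (W := W) (Ls := L2s) (Lv := L2v) ιV grad ιW curl
    mean ha hb hinfsup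
  set cT := √(2 * μe + 2 * μmicro) / γ
  set cN := 1 / γ + 1
  obtain ⟨C, hC, hbound⟩ :=
    exists_norm_le_of_isMixedSolution hB hcoer hlift hα (by positivity) (by positivity)
  refine ⟨(2 * cT / √α + cN + cT ^ 2) * C / μmacro, by positivity, ?_⟩
  intro Lc hLc ht₁ p m pInf mInf hm hmInf hP₁ hP₂ hI₁ hI₂
  have ht₀ : 0 ≤ 1 / (μmacro * Lc ^ 2) := by positivity
  have hsol := isMixedSolution_energyMap (V := V) (W := W) (Ls := L2s) (Lv := L2v) grad ιW curl
    mean ha hb hm hP₁ hP₂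
  have hsolInf := isMixedSolution_energyMap (V := V) (W := W) (Ls := L2s) (Lv := L2v) grad ιW curl
    mean ha hb (t := 0) hmInf hI₁ (fun δ hδ => by simpa using hI₂ δ hδ)
  have hload := load_le_mul_prodGraphSeminorm (V := V) (W := W) (Ls := L2s) (Lv := L2v)
    ιV grad ιW curl f ω
  calc _ = N (pInf - p) + ‖mInf - m‖ := by simp [N, prodGraphSeminorm_apply]
    _ ≤ (2 * cT / √α + cN + cT ^ 2) * (1 / (μmacro * Lc ^ 2) * ‖m‖) :=
        hsol.seminorm_sub_add_norm_sub_le hB hcoer hlift hα (by positivity) (by positivity) ht₀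
          hsolInf
    _ ≤ (2 * cT / √α + cN + cT ^ 2) * (1 / (μmacro * Lc ^ 2) * (C * (‖f‖ + ‖ω‖))) := by
        gcongr
        exact hbound (by positivity) hload ht₀ ht₁ hsol
    _ = (2 * cT / √α + cN + cT ^ 2) * C / μmacro / Lc ^ 2 * (‖f‖ + ‖ω‖) := by
        field_simp

/-- `L_c`-robust perturbation estimate of the extended Brezzi theory: if `({u,ζ},m)` solves
the mixed problem with penalty parameter `t = 1/(μmacro Lc²) ≤ 1` and `({u_∞,ζ_∞},m_∞)`
solves the limit problem (`t = 0`), then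
`‖{u_∞-u, ζ_∞-ζ}‖_X + ‖m_∞ - m‖_{L²} ≤ (c₂/Lc²)(‖f‖_{L²} + ‖ω‖_{L²})`
with `c₂` independent of `Lc`. The bilinear form `a` is coercive on `ker b` and `b`
satisfies an inf–sup condition, both with constants independent of `Lc`. -/
theorem mixed_problem_Lc_perturbation
    {V W L2s L2v : Type*}
    [NormedAddCommGroup V] [InnerProductSpace ℝ V] [CompleteSpace V]
    [NormedAddCommGroup W] [InnerProductSpace ℝ W] [CompleteSpace W]
    [NormedAddCommGroup L2s] [InnerProductSpace ℝ L2s] [CompleteSpace L2s]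
    [NormedAddCommGroup L2v] [InnerProductSpace ℝ L2v] [CompleteSpace L2v]
    (ιV : V →L[ℝ] L2s) (grad : V →L[ℝ] L2v)
    (ιW : W →L[ℝ] L2v) (curl : W →L[ℝ] L2s)
    (mean : L2s →L[ℝ] ℝ) (hStokes : ∀ ζ : W, mean (curl ζ) = 0)
    (hV : ∀ u : V, ‖u‖ ^ 2 = ‖ιV u‖ ^ 2 + ‖grad u‖ ^ 2)
    (hW : ∀ ζ : W, ‖ζ‖ ^ 2 = ‖ιW ζ‖ ^ 2 + ‖curl ζ‖ ^ 2)
    (μe μmicro μmacro : ℝ) (hμe : 0 < μe) (hμmicro : 0 < μmicro) (hμmacro : 0 < μmacro)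
    (α : ℝ) (hα : 0 < α)
    (hker : ∀ p : V × W, curl p.2 = 0 →
      α * (Real.sqrt (‖ιV p.1‖ ^ 2 + ‖grad p.1‖ ^ 2)
            + Real.sqrt (‖ιW p.2‖ ^ 2 + ‖curl p.2‖ ^ 2)) ^ 2 ≤
        2 * μe * ‖grad p.1 - ιW p.2‖ ^ 2 + 2 * μmicro * ‖ιW p.2‖ ^ 2)
    (γ : ℝ) (hγ : 0 < γ)
    (hinfsup : ∀ m : L2s, mean m = 0 →
      ∃ ζ : W, curl ζ = m ∧ ‖ιW ζ‖ ≤ (1 / γ) * ‖m‖)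
    (f : L2s) (ω : L2v) :
    ∃ c₂ : ℝ, 0 < c₂ ∧
      ∀ Lc : ℝ, 0 < Lc → 1 / (μmacro * Lc ^ 2) ≤ 1 →
        ∀ (p : V × W) (m : L2s) (pInf : V × W) (mInf : L2s),
          mean m = 0 → mean mInf = 0 →
          (∀ q : V × W,
            2 * μe * ⟪grad p.1 - ιW p.2, grad q.1 - ιW q.2⟫
              + 2 * μmicro * ⟪ιW p.2, ιW q.2⟫ + ⟪curl q.2, m⟫
            = ⟪f, ιV q.1⟫ + ⟪ω, ιW q.2⟫) →
          (∀ δm : L2s, mean δm = 0 →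
            ⟪curl p.2, δm⟫ - (1 / (μmacro * Lc ^ 2)) * ⟪m, δm⟫ = 0) →
          (∀ q : V × W,
            2 * μe * ⟪grad pInf.1 - ιW pInf.2, grad q.1 - ιW q.2⟫
              + 2 * μmicro * ⟪ιW pInf.2, ιW q.2⟫ + ⟪curl q.2, mInf⟫
            = ⟪f, ιV q.1⟫ + ⟪ω, ιW q.2⟫) →
          (∀ δm : L2s, mean δm = 0 → ⟪curl pInf.2, δm⟫ = 0) →
          Real.sqrt (‖ιV (pInf.1 - p.1)‖ ^ 2 + ‖grad (pInf.1 - p.1)‖ ^ 2)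
              + Real.sqrt (‖ιW (pInf.2 - p.2)‖ ^ 2 + ‖curl (pInf.2 - p.2)‖ ^ 2)
              + ‖mInf - m‖ ≤
            c₂ / Lc ^ 2 * (‖f‖ + ‖ω‖) :=
  mixed_problem_Lc_perturbation_general ιV grad ιW curl mean hStokes μe μmicro μmacro hμe hμmicro
    hμmacro α hα hker γ hγ hinfsup f ω
end
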